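/- arXiv:0902.1421 — 7 statements merged into one kernel-verified Lean document; each statement's English description precedes it below -/
import Mathlib

section
/- In the region where a1 > u1 > a2 > u2 > a3 > u3 and with x_j = ε_j √(∏_k (a_j - u_k) / ∏_{k≠j} (a_j - a_k)) (ε_j = ±1 fixed), the Euclidean metric satisfies |dx|² = ∑_k [∏_{j≠k} (u_k - u_j) / (4 ∏_j (a_j - u_k))] (du_k)², i.e., for smooth curves u(t) with values in this region, |x'(t)|² = ∑_k [∏_{j≠k}(u_k - u_j)/(4∏_j(a_j - u_k))] (u_k'(t))². -/
/-!
On the region, `xⱼ² = Fⱼ(u) / cⱼ` with `Fⱼ(u) = ∏ₖ (aⱼ - uₖ)` and `cⱼ = ∏_{k≠j} (aⱼ - aₖ)`,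
so `xⱼ'² = (Fⱼ')² / (4 cⱼ Fⱼ)`, where `Fⱼ' = -∑ₖ uₖ' ∏_{l≠k} (aⱼ - uₗ)`. Expanding the square and
summing over `j`, the coefficient of `uₖ' uₗ'` (`k ≠ l`) is a multiple of `∑ⱼ (aⱼ - uₘ) / cⱼ = 0`
(`m ∉ {k, l}`), and that of `uₖ'²` is `∑ⱼ ∏_{l≠k} (aⱼ - uₗ) / (cⱼ (aⱼ - uₖ))`, which a
partial-fraction expansion in the nodes `aⱼ` evaluates to `∏_{l≠k} (uₖ - uₗ) / ∏ⱼ (aⱼ - uₖ)`.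
-/

theorem sq_deriv_const_mul_sqrt {g : ℝ → ℝ} {g' t : ℝ} (e : ℝ) (hg : HasDerivAt g g' t)
    (hpos : 0 < g t) :
    deriv (fun s => e * √(g s)) t ^ 2 = e ^ 2 * g' ^ 2 / (4 * g t) := by
  rw [((hg.sqrt hpos.ne').const_mul e).deriv, mul_pow, div_pow, mul_pow, Real.sq_sqrt hpos.le]
  ring

theorem hasDerivAt_prod_sub_div {u1 u2 u3 : ℝ → ℝ} {d1 d2 d3 t : ℝ} (a c : ℝ)
    (h1 : HasDerivAt u1 d1 t) (h2 : HasDerivAt u2 d2 t) (h3 : HasDerivAt u3 d3 t) :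
    HasDerivAt (fun s => (a - u1 s) * (a - u2 s) * (a - u3 s) / c)
      (-(d1 * ((a - u2 t) * (a - u3 t)) + d2 * ((a - u1 t) * (a - u3 t))
        + d3 * ((a - u1 t) * (a - u2 t))) / c) t := by
  refine ((((h1.const_sub a).mul (h2.const_sub a)).mul (h3.const_sub a)).div_const c).congr_deriv
    ?_
  simp only [Pi.mul_apply]
  ring

theorem sq_deriv_elliptic_coordinate {u1 u2 u3 x : ℝ → ℝ} {d1 d2 d3 t : ℝ} {a c e : ℝ}
    (he : e ^ 2 = 1) (h1 : HasDerivAt u1 d1 t) (h2 : HasDerivAt u2 d2 t)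
    (h3 : HasDerivAt u3 d3 t) (hpos : 0 < (a - u1 t) * (a - u2 t) * (a - u3 t) / c)
    (hx : ∀ s, x s = e * √((a - u1 s) * (a - u2 s) * (a - u3 s) / c)) :
    deriv x t ^ 2 =
      (d1 * ((a - u2 t) * (a - u3 t)) + d2 * ((a - u1 t) * (a - u3 t))
        + d3 * ((a - u1 t) * (a - u2 t))) ^ 2
        / (4 * c * ((a - u1 t) * (a - u2 t) * (a - u3 t))) := by
  have hc : c ≠ 0 := by rintro rfl; simp at hpos
  rw [funext hx, sq_deriv_const_mul_sqrt e (hasDerivAt_prod_sub_div a c h1 h2 h3) hpos, he]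
  field_simp

/- Both identities say that the residues of a rational function vanishing to order at least two at
infinity sum to zero: `(z - r) / ∏ⱼ (z - aⱼ)` and `(z - w) (z - r) / ((z - v) ∏ⱼ (z - aⱼ))`. -/
theorem sum_div_prod_sub_eq_zero {a1 a2 a3 : ℝ} (h12 : a1 ≠ a2) (h13 : a1 ≠ a3)
    (h23 : a2 ≠ a3) (r : ℝ) :
    (a1 - r) / ((a1 - a2) * (a1 - a3)) + (a2 - r) / ((a2 - a1) * (a2 - a3))
      + (a3 - r) / ((a3 - a1) * (a3 - a2)) = 0 := by
  have := sub_ne_zero.2 h12; have := sub_ne_zero.2 h13; have := sub_ne_zero.2 h23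
  have := sub_ne_zero.2 h12.symm; have := sub_ne_zero.2 h13.symm; have := sub_ne_zero.2 h23.symm
  field_simp
  ring

theorem sum_mul_div_prod_sub {a1 a2 a3 : ℝ} (h12 : a1 ≠ a2) (h13 : a1 ≠ a3) (h23 : a2 ≠ a3)
    {v : ℝ} (h1 : a1 ≠ v) (h2 : a2 ≠ v) (h3 : a3 ≠ v) (w r : ℝ) :
    (a1 - w) * (a1 - r) / ((a1 - a2) * (a1 - a3) * (a1 - v))
      + (a2 - w) * (a2 - r) / ((a2 - a1) * (a2 - a3) * (a2 - v))
      + (a3 - w) * (a3 - r) / ((a3 - a1) * (a3 - a2) * (a3 - v))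
      = (v - w) * (v - r) / ((a1 - v) * (a2 - v) * (a3 - v)) := by
  have := sub_ne_zero.2 h12; have := sub_ne_zero.2 h13; have := sub_ne_zero.2 h23
  have := sub_ne_zero.2 h12.symm; have := sub_ne_zero.2 h13.symm; have := sub_ne_zero.2 h23.symm
  have := sub_ne_zero.2 h1; have := sub_ne_zero.2 h2; have := sub_ne_zero.2 h3
  field_simp
  ring

theorem sq_sum_div_prod_eq {A1 A2 A3 : ℝ} (h1 : A1 ≠ 0) (h2 : A2 ≠ 0) (h3 : A3 ≠ 0)
    (c d1 d2 d3 : ℝ) :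
    (d1 * (A2 * A3) + d2 * (A1 * A3) + d3 * (A1 * A2)) ^ 2 / (4 * c * (A1 * A2 * A3)) =
      d1 ^ 2 / 4 * (A2 * A3 / (c * A1)) + d2 ^ 2 / 4 * (A1 * A3 / (c * A2))
        + d3 ^ 2 / 4 * (A1 * A2 / (c * A3))
        + d1 * d2 / 2 * (A3 / c) + d1 * d3 / 2 * (A2 / c) + d2 * d3 / 2 * (A1 / c) := by
  rcases eq_or_ne c 0 with rfl | hc
  · simp
  field_simp
  ring

theorem elliptic_metric_identity {a1 a2 a3 v1 v2 v3 : ℝ} (ha12 : a1 ≠ a2) (ha13 : a1 ≠ a3)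
    (ha23 : a2 ≠ a3) (hF1 : (a1 - v1) * (a1 - v2) * (a1 - v3) ≠ 0)
    (hF2 : (a2 - v1) * (a2 - v2) * (a2 - v3) ≠ 0) (hF3 : (a3 - v1) * (a3 - v2) * (a3 - v3) ≠ 0)
    (d1 d2 d3 : ℝ) :
    (d1 * ((a1 - v2) * (a1 - v3)) + d2 * ((a1 - v1) * (a1 - v3))
        + d3 * ((a1 - v1) * (a1 - v2))) ^ 2
        / (4 * ((a1 - a2) * (a1 - a3)) * ((a1 - v1) * (a1 - v2) * (a1 - v3)))
      + (d1 * ((a2 - v2) * (a2 - v3)) + d2 * ((a2 - v1) * (a2 - v3))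
        + d3 * ((a2 - v1) * (a2 - v2))) ^ 2
        / (4 * ((a2 - a1) * (a2 - a3)) * ((a2 - v1) * (a2 - v2) * (a2 - v3)))
      + (d1 * ((a3 - v2) * (a3 - v3)) + d2 * ((a3 - v1) * (a3 - v3))
        + d3 * ((a3 - v1) * (a3 - v2))) ^ 2
        / (4 * ((a3 - a1) * (a3 - a2)) * ((a3 - v1) * (a3 - v2) * (a3 - v3)))
      = (v1 - v2) * (v1 - v3) / (4 * ((a1 - v1) * (a2 - v1) * (a3 - v1))) * d1 ^ 2
        + (v2 - v1) * (v2 - v3) / (4 * ((a1 - v2) * (a2 - v2) * (a3 - v2))) * d2 ^ 2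
        + (v3 - v1) * (v3 - v2) / (4 * ((a1 - v3) * (a2 - v3) * (a3 - v3))) * d3 ^ 2 := by
  simp only [mul_ne_zero_iff, sub_ne_zero] at hF1 hF2 hF3
  obtain ⟨⟨h11, h12⟩, h13⟩ := hF1
  obtain ⟨⟨h21, h22⟩, h23⟩ := hF2
  obtain ⟨⟨h31, h32⟩, h33⟩ := hF3
  rw [sq_sum_div_prod_eq (sub_ne_zero.2 h11) (sub_ne_zero.2 h12) (sub_ne_zero.2 h13),
    sq_sum_div_prod_eq (sub_ne_zero.2 h21) (sub_ne_zero.2 h22) (sub_ne_zero.2 h23),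
    sq_sum_div_prod_eq (sub_ne_zero.2 h31) (sub_ne_zero.2 h32) (sub_ne_zero.2 h33),
    -- `ring` treats `(4 * D)⁻¹` with `D` a product of differences as an atom unrelated to `D⁻¹`
    ← div_div _ (4 : ℝ), ← div_div _ (4 : ℝ), ← div_div _ (4 : ℝ)]
  linear_combination (d1 ^ 2 / 4) * sum_mul_div_prod_sub ha12 ha13 ha23 h11 h21 h31 v2 v3
    + (d2 ^ 2 / 4) * sum_mul_div_prod_sub ha12 ha13 ha23 h12 h22 h32 v1 v3
    + (d3 ^ 2 / 4) * sum_mul_div_prod_sub ha12 ha13 ha23 h13 h23 h33 v1 v2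
    + (d1 * d2 / 2) * sum_div_prod_sub_eq_zero ha12 ha13 ha23 v3
    + (d1 * d3 / 2) * sum_div_prod_sub_eq_zero ha12 ha13 ha23 v2
    + (d2 * d3 / 2) * sum_div_prod_sub_eq_zero ha12 ha13 ha23 v1

theorem elliptic_radicands_pos {a1 a2 a3 v1 v2 v3 : ℝ}
    (h : a1 > v1 ∧ v1 > a2 ∧ a2 > v2 ∧ v2 > a3 ∧ a3 > v3) :
    0 < (a1 - v1) * (a1 - v2) * (a1 - v3) / ((a1 - a2) * (a1 - a3)) ∧
      0 < (a2 - v1) * (a2 - v2) * (a2 - v3) / ((a2 - a1) * (a2 - a3)) ∧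
      0 < (a3 - v1) * (a3 - v2) * (a3 - v3) / ((a3 - a1) * (a3 - a2)) := by
  obtain ⟨h1, h2, h3, h4, h5⟩ := h
  refine ⟨div_pos ?_ ?_, div_pos_of_neg_of_neg ?_ ?_, div_pos ?_ ?_⟩
  · exact mul_pos (mul_pos (by linarith) (by linarith)) (by linarith)
  · exact mul_pos (by linarith) (by linarith)
  · exact mul_neg_of_neg_of_pos (mul_neg_of_neg_of_pos (by linarith) (by linarith)) (by linarith)
  · exact mul_neg_of_neg_of_pos (by linarith) (by linarith)
  · exact mul_pos (mul_pos_of_neg_of_neg (by linarith) (by linarith)) (by linarith)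
  · exact mul_pos_of_neg_of_neg (by linarith) (by linarith)

/-- The Euclidean line element of ℝ³ in elliptic coordinates is diagonal:
`|dx|² = ∑ₖ [∏_{j≠k}(uₖ - uⱼ) / (4 ∏ⱼ(aⱼ - uₖ))] (duₖ)²`. -/
theorem linear_element_elliptic_coordinates
    (a1 a2 a3 : ℝ) (h12 : a1 > a2) (h23 : a2 > a3)
    (e1 e2 e3 : ℝ) (he1 : e1 = 1 ∨ e1 = -1) (he2 : e2 = 1 ∨ e2 = -1)
    (he3 : e3 = 1 ∨ e3 = -1)
    (u1 u2 u3 : ℝ → ℝ)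
    (hreg : ∀ s, a1 > u1 s ∧ u1 s > a2 ∧ a2 > u2 s ∧ u2 s > a3 ∧ a3 > u3 s)
    (t : ℝ)
    (hd1 : DifferentiableAt ℝ u1 t) (hd2 : DifferentiableAt ℝ u2 t)
    (hd3 : DifferentiableAt ℝ u3 t)
    (x1 x2 x3 : ℝ → ℝ)
    (hx1 : ∀ s, x1 s =
      e1 * Real.sqrt (((a1 - u1 s) * (a1 - u2 s) * (a1 - u3 s)) / ((a1 - a2) * (a1 - a3))))
    (hx2 : ∀ s, x2 s =
      e2 * Real.sqrt (((a2 - u1 s) * (a2 - u2 s) * (a2 - u3 s)) / ((a2 - a1) * (a2 - a3))))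
    (hx3 : ∀ s, x3 s =
      e3 * Real.sqrt (((a3 - u1 s) * (a3 - u2 s) * (a3 - u3 s)) / ((a3 - a1) * (a3 - a2)))) :
    (deriv x1 t) ^ 2 + (deriv x2 t) ^ 2 + (deriv x3 t) ^ 2 =
      ((u1 t - u2 t) * (u1 t - u3 t)) /
          (4 * ((a1 - u1 t) * (a2 - u1 t) * (a3 - u1 t))) * (deriv u1 t) ^ 2 +
        ((u2 t - u1 t) * (u2 t - u3 t)) /
          (4 * ((a1 - u2 t) * (a2 - u2 t) * (a3 - u2 t))) * (deriv u2 t) ^ 2 +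
        ((u3 t - u1 t) * (u3 t - u2 t)) /
          (4 * ((a1 - u3 t) * (a2 - u3 t) * (a3 - u3 t))) * (deriv u3 t) ^ 2 := by
  obtain ⟨hp1, hp2, hp3⟩ := elliptic_radicands_pos (hreg t)
  have sq_eq_one : ∀ e : ℝ, e = 1 ∨ e = -1 → e ^ 2 = 1 := by rintro e (rfl | rfl) <;> norm_num
  have num_ne_zero : ∀ {F c : ℝ}, 0 < F / c → F ≠ 0 := fun h hF => by simp [hF] at h
  rw [sq_deriv_elliptic_coordinate (sq_eq_one e1 he1) hd1.hasDerivAt hd2.hasDerivAt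
      hd3.hasDerivAt hp1 hx1,
    sq_deriv_elliptic_coordinate (sq_eq_one e2 he2) hd1.hasDerivAt hd2.hasDerivAt
      hd3.hasDerivAt hp2 hx2,
    sq_deriv_elliptic_coordinate (sq_eq_one e3 he3) hd1.hasDerivAt hd2.hasDerivAt
      hd3.hasDerivAt hp3 hx3]
  exact elliptic_metric_identity h12.ne' (h23.trans h12).ne' h23.ne' (num_ne_zero hp1)
    (num_ne_zero hp2) (num_ne_zero hp3) _ _ _
end

section
/- Let A be a symmetric invertible complex (n+1)×(n+1) matrix and √R_z a symmetric matrix commuting with A with (√R_z)² = I - zA. For x⁰, x¹ with (x⁰)ᵀAx⁰ = (x¹)ᵀAx¹ = 1, set x_z⁰ = √R_z x⁰, x_z¹ = √R_z x¹. Then |x_z¹ - x⁰|² = |x_z⁰ - x¹|² (Ivory's theorem for central quadrics). -/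
open Matrix

/-- Ivory's theorem for central quadrics: `|x_z¹ - x⁰|² = |x_z⁰ - x¹|²`. -/
theorem ivory_theorem_central_quadrics
    (n : ℕ) (A : Matrix (Fin (n + 1)) (Fin (n + 1)) ℂ)
    (hA : A.IsSymm) (hAinv : IsUnit A.det)
    (z : ℂ) (S : Matrix (Fin (n + 1)) (Fin (n + 1)) ℂ)
    (hS : S.IsSymm) (hS2 : S * S = 1 - z • A) (hcomm : S * A = A * S)
    (x0 x1 : Fin (n + 1) → ℂ)
    (hx0 : x0 ⬝ᵥ A.mulVec x0 = 1) (hx1 : x1 ⬝ᵥ A.mulVec x1 = 1) :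
    (S.mulVec x1 - x0) ⬝ᵥ (S.mulVec x1 - x0) =
      (S.mulVec x0 - x1) ⬝ᵥ (S.mulVec x0 - x1) := by
  have hsym : ∀ u v : Fin (n + 1) → ℂ, u ⬝ᵥ S.mulVec v = v ⬝ᵥ S.mulVec u := by
    intro u v
    rw [dotProduct_mulVec, ← hS.eq, vecMul_transpose, dotProduct_comm, hS.eq]
  have hSS : ∀ u : Fin (n + 1) → ℂ, S.mulVec u ⬝ᵥ S.mulVec u
      = u ⬝ᵥ u - z * (u ⬝ᵥ A.mulVec u) := by
    intro u
    rw [dotProduct_mulVec, ← hS.eq, vecMul_transpose, mulVec_mulVec, hS.eq, hS2, dotProduct_comm]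
    simp [sub_mulVec, smul_mulVec, dotProduct_sub, dotProduct_smul,
      smul_eq_mul]
  simp only [dotProduct_sub, sub_dotProduct, hSS, hx0, hx1]
  rw [hsym x0 x1, dotProduct_comm (S.mulVec x1) x0, dotProduct_comm (S.mulVec x0) x1,
    hsym x0 x1]
  ring
end

section
/- Let A be symmetric invertible and z₁ ≠ z₂ complex numbers with R_{z₁} = I - z₁A and R_{z₂} = I - z₂A invertible. If a point x ∈ ℂ^{n+1} lies on both confocal quadrics Q_{z₁}(x) = xᵀA R_{z₁}^{-1} x - 1 = 0 and Q_{z₂}(x) = xᵀA R_{z₂}^{-1} x - 1 = 0, then the normal directions N̂_{z₁} = R_{z₁}^{-1}Ax and N̂_{z₂} = R_{z₂}^{-1}Ax are orthogonal: N̂_{z₁}ᵀ N̂_{z₂} = 0. (Lamé: confocal quadrics intersect orthogonally.) -/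
open Matrix

/-- Lamé: two confocal central quadrics intersect orthogonally. -/
theorem lame_confocal_quadrics_orthogonal
    (n : ℕ) (A : Matrix (Fin (n + 1)) (Fin (n + 1)) ℂ)
    (hA : A.IsSymm) (hAinv : IsUnit A.det)
    (z1 z2 : ℂ) (hz : z1 ≠ z2)
    (hR1 : IsUnit (1 - z1 • A).det) (hR2 : IsUnit (1 - z2 • A).det)
    (x : Fin (n + 1) → ℂ)
    (hQ1 : x ⬝ᵥ (A * (1 - z1 • A)⁻¹).mulVec x - 1 = 0)
    (hQ2 : x ⬝ᵥ (A * (1 - z2 • A)⁻¹).mulVec x - 1 = 0) :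
    ((1 - z1 • A)⁻¹ * A).mulVec x ⬝ᵥ ((1 - z2 • A)⁻¹ * A).mulVec x = 0 := by
  set R1 := 1 - z1 • A with hR1def
  set R2 := 1 - z2 • A with hR2def
  -- commutation of A with R1, R2
  have hc1 : A * R1 = R1 * A := by
    simp [hR1def, mul_sub, sub_mul, Matrix.mul_smul, Matrix.smul_mul]
  have hc2 : A * R2 = R2 * A := by
    simp [hR2def, mul_sub, sub_mul, Matrix.mul_smul, Matrix.smul_mul]
  have hci1 : A * R1⁻¹ = R1⁻¹ * A := by
    have h := congrArg (fun M => R1⁻¹ * M * R1⁻¹) hc1.symm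
    simp only [Matrix.mul_assoc] at h
    rw [← Matrix.mul_assoc R1⁻¹ R1, Matrix.nonsing_inv_mul _ hR1, Matrix.one_mul,
      Matrix.mul_nonsing_inv _ hR1, Matrix.mul_one] at h
    exact h
  have hci2 : A * R2⁻¹ = R2⁻¹ * A := by
    have h := congrArg (fun M => R2⁻¹ * M * R2⁻¹) hc2.symm
    simp only [Matrix.mul_assoc] at h
    rw [← Matrix.mul_assoc R2⁻¹ R2, Matrix.nonsing_inv_mul _ hR2, Matrix.one_mul,
      Matrix.mul_nonsing_inv _ hR2, Matrix.mul_one] at h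
    exact h
  -- symmetry of R1, R1⁻¹
  have hS1 : R1ᵀ = R1 := by
    simp [hR1def, Matrix.transpose_sub, Matrix.transpose_smul, hA.eq]
  have hS2 : R2ᵀ = R2 := by
    simp [hR2def, Matrix.transpose_sub, Matrix.transpose_smul, hA.eq]
  -- key matrix identity
  have key : A * R1⁻¹ - A * R2⁻¹ = (z1 - z2) • (A * R1⁻¹ * R2⁻¹ * A) := by
    have hRR : R2 - R1 = (z1 - z2) • A := by
      simp [hR1def, hR2def, sub_smul]
    calc A * R1⁻¹ - A * R2⁻¹
        = A * R1⁻¹ * (R2 - R1) * R2⁻¹ := by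
          rw [mul_sub, sub_mul, Matrix.mul_assoc (A * R1⁻¹) R2 R2⁻¹,
            Matrix.mul_nonsing_inv _ hR2, mul_one,
            Matrix.mul_assoc (A * R1⁻¹) R1 R2⁻¹,
            Matrix.mul_assoc A R1⁻¹ (R1 * R2⁻¹), ← Matrix.mul_assoc R1⁻¹ R1 R2⁻¹,
            Matrix.nonsing_inv_mul _ hR1, Matrix.one_mul]
      _ = (z1 - z2) • (A * R1⁻¹ * (A * R2⁻¹)) := by
          rw [hRR, Matrix.mul_smul, Matrix.smul_mul, Matrix.mul_assoc]
      _ = (z1 - z2) • (A * R1⁻¹ * R2⁻¹ * A) := by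
          rw [hci2]; simp [Matrix.mul_assoc]
  -- the difference of quadric equations
  have hdiff : x ⬝ᵥ (A * R1⁻¹ - A * R2⁻¹).mulVec x = 0 := by
    rw [Matrix.sub_mulVec, dotProduct_sub]
    have := sub_eq_sub_iff_sub_eq_sub.mp (hQ1.trans hQ2.symm)
    linear_combination hQ1 - hQ2
  rw [key] at hdiff
  rw [Matrix.smul_mulVec, dotProduct_smul, smul_eq_mul] at hdiff
  have hz' : z1 - z2 ≠ 0 := sub_ne_zero.mpr hz
  have hmain : x ⬝ᵥ (A * R1⁻¹ * R2⁻¹ * A).mulVec x = 0 :=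
    (mul_eq_zero.mp hdiff).resolve_left hz'
  -- rewrite the goal as this bilinear form
  have hdot : ∀ (M N : Matrix (Fin (n + 1)) (Fin (n + 1)) ℂ) (y : Fin (n + 1) → ℂ),
      M.mulVec y ⬝ᵥ N.mulVec y = y ⬝ᵥ (Mᵀ * N).mulVec y := by
    intro M N y
    calc M.mulVec y ⬝ᵥ N.mulVec y
        = (y ᵥ* Mᵀ) ⬝ᵥ N.mulVec y := by rw [Matrix.vecMul_transpose]
      _ = y ⬝ᵥ Mᵀ.mulVec (N.mulVec y) := (Matrix.dotProduct_mulVec y Mᵀ (N.mulVec y)).symm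
      _ = y ⬝ᵥ (Mᵀ * N).mulVec y := by rw [Matrix.mulVec_mulVec]
  have hT : (R1⁻¹ * A)ᵀ = A * R1⁻¹ := by
    rw [Matrix.transpose_mul, hA.eq, Matrix.transpose_nonsing_inv, hS1]
  rw [hdot, hT, ← Matrix.mul_assoc]
  exact hmain
end

section
/- Bianchi's preservation of angles between segments and rulings: with A symmetric invertible, R_z = I - zA, √R_z symmetric commuting with A, x⁰, x¹ on the central quadric xᵀAx = 1, and w⁰ a ruling direction at x⁰ (i.e., (w⁰)ᵀAw⁰ = 0 and (w⁰)ᵀAx⁰ = 0), setting V₀¹ = √R_z x¹ - x⁰, V₁⁰ = √R_z x⁰ - x¹, w_z⁰ = √R_z w⁰, one has (V₀¹)ᵀw⁰ + (V₁⁰)ᵀw_z⁰ = -z (Ax⁰)ᵀ w⁰ = 0. -/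
open Matrix

/-- Bianchi: preservation of angles between segments and rulings:
`(V₀¹)ᵀw⁰ + (V₁⁰)ᵀw_z⁰ = -z (Ax⁰)ᵀw⁰ = 0`. -/
theorem preservation_angles_segments_rulings
    (n : ℕ) (A : Matrix (Fin (n + 1)) (Fin (n + 1)) ℂ)
    (hA : A.IsSymm) (hAinv : IsUnit A.det)
    (z : ℂ) (S : Matrix (Fin (n + 1)) (Fin (n + 1)) ℂ)
    (hS : S.IsSymm) (hS2 : S * S = 1 - z • A) (hcomm : S * A = A * S)
    (x0 x1 w0 : Fin (n + 1) → ℂ)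
    (hx0 : x0 ⬝ᵥ A.mulVec x0 = 1) (hx1 : x1 ⬝ᵥ A.mulVec x1 = 1)
    (hw0 : w0 ⬝ᵥ A.mulVec w0 = 0) (hw0x0 : w0 ⬝ᵥ A.mulVec x0 = 0) :
    (S.mulVec x1 - x0) ⬝ᵥ w0 + (S.mulVec x0 - x1) ⬝ᵥ S.mulVec w0 =
        -z * (A.mulVec x0 ⬝ᵥ w0) ∧
      -z * (A.mulVec x0 ⬝ᵥ w0) = 0 := by
  have key : ∀ u v : Fin (n + 1) → ℂ, S.mulVec u ⬝ᵥ v = u ⬝ᵥ S.mulVec v := by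
    intro u v
    rw [dotProduct_mulVec, ← Matrix.mulVec_transpose, hS.eq, dotProduct_comm]
  have h2 : S.mulVec x0 ⬝ᵥ S.mulVec w0 = x0 ⬝ᵥ w0 - z * (x0 ⬝ᵥ A.mulVec w0) := by
    rw [key, mulVec_mulVec, hS2, sub_mulVec, smul_mulVec, one_mulVec,
      dotProduct_sub, dotProduct_smul, smul_eq_mul]
  have hAw0 : A.mulVec x0 ⬝ᵥ w0 = 0 := by
    rw [dotProduct_comm, ← hw0x0, dotProduct_mulVec, ← Matrix.mulVec_transpose, hA.eq,
      dotProduct_comm]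
  have hx0Aw : x0 ⬝ᵥ A.mulVec w0 = 0 := by
    rw [dotProduct_mulVec, ← Matrix.mulVec_transpose, hA.eq]; exact hAw0
  constructor
  · rw [sub_dotProduct, sub_dotProduct, h2, key x1 w0, hAw0, hx0Aw]
    ring
  · rw [hAw0]; ring
end

section
/- Graves's vertex reflection identity: let a1 > a2 > 0, z < 0, and θ₀ ∈ ℝ. Define for j = 1, 2: cos θ_j = (cos θ₀ √(1 - z/a1) - (-1)^j sin θ₀ √(1 - z/a2) √(-z(sin²θ₀/a2 + cos²θ₀/a1))) / (1 - z(sin²θ₀/a2 + cos²θ₀/a1)) and sin θ_j = (sin θ₀ √(1 - z/a2) + (-1)^j cos θ₀ √(1 - z/a1) √(-z(sin²θ₀/a2 + cos²θ₀/a1))) / (1 - z(sin²θ₀/a2 + cos²θ₀/a1)). Then cos²θ_j + sin²θ_j = 1 and the tangency condition cos θ₀ √(1 - z/a1) cos θ_j + sin θ₀ √(1 - z/a2) sin θ_j = 1 holds for j = 1, 2. -/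
/-!
In the affine coordinates in which the inner ellipse `x₀` is the unit circle, the point `x_z⁰`
becomes `P = (cos θ₀ √(1 - z/a1), sin θ₀ √(1 - z/a2))`, with `|P|² = 1 - zρ`. The tangency points
from an exterior point `P` to the unit circle are `(P ∓ r P^⊥) / |P|²` with `r² = |P|² - 1`,
which is exactly what the formulas for `cos θⱼ`, `sin θⱼ` say.
-/

theorem tangent_points_of_unit_circle {p q r e D : ℝ} (he : e ^ 2 = 1)
    (hD : p ^ 2 + q ^ 2 = D) (hr : r ^ 2 = D - 1) :
    ((p - e * q * r) / D) ^ 2 + ((q + e * p * r) / D) ^ 2 = 1 ∧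
      p * ((p - e * q * r) / D) + q * ((q + e * p * r) / D) = 1 := by
  have hD0 : D ≠ 0 := by nlinarith [sq_nonneg r]
  constructor
  · rw [div_pow, div_pow, ← add_div, div_eq_one_iff_eq (pow_ne_zero 2 hD0)]
    linear_combination (1 + e ^ 2 * r ^ 2) * hD + D * r ^ 2 * he + D * hr
  · rw [← mul_div_assoc, ← mul_div_assoc, ← add_div, div_eq_one_iff_eq hD0]
    linear_combination hD

theorem sq_norm_confocal_point {a1 a2 z : ℝ} (θ : ℝ) (h1 : 0 < a1) (h2 : 0 < a2) (hz : z ≤ 0) :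
    (Real.cos θ * Real.sqrt (1 - z / a1)) ^ 2 + (Real.sin θ * Real.sqrt (1 - z / a2)) ^ 2 =
      1 - z * (Real.sin θ ^ 2 / a2 + Real.cos θ ^ 2 / a1) := by
  have hz1 : 0 ≤ 1 - z / a1 := by
    have := div_nonpos_of_nonpos_of_nonneg hz h1.le
    linarith
  have hz2 : 0 ≤ 1 - z / a2 := by
    have := div_nonpos_of_nonpos_of_nonneg hz h2.le
    linarith
  rw [mul_pow, mul_pow, Real.sq_sqrt hz1, Real.sq_sqrt hz2]
  field_simp
  linear_combination (a1 * a2) * Real.cos_sq_add_sin_sq θ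

/-- Graves's vertex configuration: the stated formulas for `cos θⱼ`, `sin θⱼ`
define points on the unit circle satisfying the tangency condition. -/
theorem graves_vertex_tangency
    (a1 a2 z θ0 : ℝ) (h12 : a1 > a2) (h2 : a2 > 0) (hz : z < 0)
    (e : ℝ) (he : e = 1 ∨ e = -1)
    (ρ : ℝ) (hρ : ρ = Real.sin θ0 ^ 2 / a2 + Real.cos θ0 ^ 2 / a1)
    (c s : ℝ)
    (hc : c = (Real.cos θ0 * Real.sqrt (1 - z / a1) -
        e * Real.sin θ0 * Real.sqrt (1 - z / a2) * Real.sqrt (-z * ρ)) / (1 - z * ρ))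
    (hs : s = (Real.sin θ0 * Real.sqrt (1 - z / a2) +
        e * Real.cos θ0 * Real.sqrt (1 - z / a1) * Real.sqrt (-z * ρ)) / (1 - z * ρ)) :
    c ^ 2 + s ^ 2 = 1 ∧
      Real.cos θ0 * Real.sqrt (1 - z / a1) * c +
        Real.sin θ0 * Real.sqrt (1 - z / a2) * s = 1 := by
  have he2 : e ^ 2 = 1 := by rcases he with rfl | rfl <;> norm_num
  have h1 : 0 < a1 := h2.trans h12
  have hnorm := sq_norm_confocal_point θ0 h1 h2 hz.le
  rw [← hρ] at hnorm
  have hρ0 : 0 ≤ ρ := by rw [hρ]; positivity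
  have hr : Real.sqrt (-z * ρ) ^ 2 = 1 - z * ρ - 1 := by
    rw [Real.sq_sqrt (mul_nonneg (neg_nonneg.2 hz.le) hρ0)]
    ring
  subst hc hs
  simpa only [mul_assoc] using tangent_points_of_unit_circle he2 hnorm hr
end

section
/- With a1 > a2 > 0, z < 0, θ₀ ∈ ℝ, and θ₁, θ₂ defined as in the Graves vertex configuration, one has for j = 1, 2: √(sin²θ_j/a2 + cos²θ_j/a1) = (√((sin²θ₀/a2 + cos²θ₀/a1)(1 - z/a1)(1 - z/a2)) + (-1)^j sin θ₀ cos θ₀ (1/a2 - 1/a1) √(-z)) / (1 - z(sin²θ₀/a2 + cos²θ₀/a1)). -/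
/-- Numerator-level polynomial identity behind the Graves constant-excess computation. -/
lemma graves_key (A B P Q e s0 c0 z u1 u2 : ℝ)
    (hA : A ^ 2 = 1 - z * u1) (hB : B ^ 2 = 1 - z * u2)
    (hP : P ^ 2 = s0 ^ 2 * u2 + c0 ^ 2 * u1) (hQ : Q ^ 2 = -z)
    (he : e ^ 2 = 1) (hsc : s0 ^ 2 + c0 ^ 2 = 1) :
    (s0 * B + e * c0 * A * (Q * P)) ^ 2 * u2 +
      (c0 * A - e * s0 * B * (Q * P)) ^ 2 * u1 =
    (P * A * B + e * s0 * c0 * (u2 - u1) * Q) ^ 2 := by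
  linear_combination
    (Q ^ 2 * P ^ 2 * (u2 * c0 ^ 2 * A ^ 2 + u1 * s0 ^ 2 * B ^ 2)
      - s0 ^ 2 * c0 ^ 2 * (u2 - u1) ^ 2 * Q ^ 2) * he +
    (P ^ 2 * (u2 * c0 ^ 2 * A ^ 2 + u1 * s0 ^ 2 * B ^ 2)
      - s0 ^ 2 * c0 ^ 2 * (u2 - u1) ^ 2) * hQ +
    (u1 * c0 ^ 2 - z * P ^ 2 * u2 * c0 ^ 2 - P ^ 2 * B ^ 2) * hA +
    (u2 * s0 ^ 2 - z * P ^ 2 * u1 * s0 ^ 2 - P ^ 2 * (1 - z * u1)) * hB +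
    (-(z * u2 * c0 ^ 2 * (1 - z * u1)) - z * u1 * s0 ^ 2 * (1 - z * u2)
      - (1 - z * u1) * (1 - z * u2)) * hP +
    (z * (u2 ^ 2 * s0 ^ 2 + u1 ^ 2 * c0 ^ 2)
      + z ^ 2 * (s0 ^ 2 * u2 + c0 ^ 2 * u1) * u1 * u2
      - z * (u1 + u2) * (s0 ^ 2 * u2 + c0 ^ 2 * u1)) * hsc

set_option maxHeartbeats 1000000 in
/-- Key analytic identity for the constant excess (Graves) property:
`√(sin²θⱼ/a2 + cos²θⱼ/a1)` in terms of the data at `θ₀`. -/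
theorem graves_constant_excess_identity
    (a1 a2 z θ0 : ℝ) (h12 : a1 > a2) (h2 : a2 > 0) (hz : z < 0)
    (e : ℝ) (he : e = 1 ∨ e = -1)
    (ρ : ℝ) (hρ : ρ = Real.sin θ0 ^ 2 / a2 + Real.cos θ0 ^ 2 / a1)
    (c s : ℝ)
    (hc : c = (Real.cos θ0 * Real.sqrt (1 - z / a1) -
        e * Real.sin θ0 * Real.sqrt (1 - z / a2) * Real.sqrt (-z * ρ)) / (1 - z * ρ))
    (hs : s = (Real.sin θ0 * Real.sqrt (1 - z / a2) +
        e * Real.cos θ0 * Real.sqrt (1 - z / a1) * Real.sqrt (-z * ρ)) / (1 - z * ρ)) :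
    Real.sqrt (s ^ 2 / a2 + c ^ 2 / a1) =
      (Real.sqrt (ρ * (1 - z / a1) * (1 - z / a2)) +
          e * Real.sin θ0 * Real.cos θ0 * (1 / a2 - 1 / a1) * Real.sqrt (-z)) /
        (1 - z * ρ) := by
  have ha1 : (0:ℝ) < a1 := lt_trans h2 h12
  set s0 := Real.sin θ0 with hs0
  set c0 := Real.cos θ0 with hc0
  have hsc : s0 ^ 2 + c0 ^ 2 = 1 := Real.sin_sq_add_cos_sq θ0
  have he2 : e ^ 2 = 1 := by rcases he with h | h <;> rw [h] <;> norm_num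
  have hu1 : (0:ℝ) < a1⁻¹ := by positivity
  have hu2 : (0:ℝ) < a2⁻¹ := by positivity
  have hu12 : a1⁻¹ < a2⁻¹ := by
    have := one_div_lt_one_div_of_lt h2 h12
    rwa [one_div, one_div] at this
  have hρ0pos : 0 < s0 ^ 2 * a2⁻¹ + c0 ^ 2 * a1⁻¹ := by
    have m1 : s0 ^ 2 * a1⁻¹ ≤ s0 ^ 2 * a2⁻¹ :=
      mul_le_mul_of_nonneg_left hu12.le (sq_nonneg s0)
    have m2 : s0 ^ 2 * a1⁻¹ + c0 ^ 2 * a1⁻¹ = a1⁻¹ := by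
      linear_combination a1⁻¹ * hsc
    linarith
  have hρpos : 0 < ρ := by
    rw [hρ, div_eq_mul_inv, div_eq_mul_inv]; exact hρ0pos
  have hznn : (0:ℝ) ≤ -z := by linarith
  have h1nn : (0:ℝ) ≤ 1 - z / a1 := by
    have : z / a1 < 0 := div_neg_of_neg_of_pos hz ha1
    linarith
  have h2nn : (0:ℝ) ≤ 1 - z / a2 := by
    have : z / a2 < 0 := div_neg_of_neg_of_pos hz h2
    linarith
  have hDpos : (0:ℝ) < 1 - z * ρ := by
    have : z * ρ < 0 := mul_neg_of_neg_of_pos hz hρpos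
    linarith
  set A := Real.sqrt (1 - z / a1) with hA
  set B := Real.sqrt (1 - z / a2) with hB
  set P := Real.sqrt ρ with hP
  set Q := Real.sqrt (-z) with hQ
  have hA2 : A ^ 2 = 1 - z * a1⁻¹ := by
    rw [hA, Real.sq_sqrt h1nn, div_eq_mul_inv]
  have hB2 : B ^ 2 = 1 - z * a2⁻¹ := by
    rw [hB, Real.sq_sqrt h2nn, div_eq_mul_inv]
  have hP2 : P ^ 2 = s0 ^ 2 * a2⁻¹ + c0 ^ 2 * a1⁻¹ := by
    rw [hP, Real.sq_sqrt hρpos.le, hρ, div_eq_mul_inv, div_eq_mul_inv]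
  have hQ2 : Q ^ 2 = -z := Real.sq_sqrt hznn
  have hQP : Real.sqrt (-z * ρ) = Q * P := Real.sqrt_mul hznn ρ
  have hPAB : Real.sqrt (ρ * (1 - z / a1) * (1 - z / a2)) = P * A * B := by
    rw [Real.sqrt_mul (by positivity), Real.sqrt_mul hρpos.le, hA, hB, hP]
  have hAnn : 0 ≤ A := Real.sqrt_nonneg _
  have hBnn : 0 ≤ B := Real.sqrt_nonneg _
  have hPnn : 0 ≤ P := Real.sqrt_nonneg _
  have hQnn : 0 ≤ Q := Real.sqrt_nonneg _
  -- nonnegativity of the numerator on the RHS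
  have hsqle : (e * s0 * c0 * (1 / a2 - 1 / a1) * Q) ^ 2 ≤ (P * A * B) ^ 2 := by
    have h1 : (e * s0 * c0 * (1 / a2 - 1 / a1) * Q) ^ 2
        = s0 ^ 2 * c0 ^ 2 * (a2⁻¹ - a1⁻¹) ^ 2 * (-z) := by
      rw [one_div, one_div, ← hQ2]
      linear_combination (s0 ^ 2 * c0 ^ 2 * (a2⁻¹ - a1⁻¹) ^ 2 * Q ^ 2) * he2
    have h2' : (P * A * B) ^ 2
        = (s0 ^ 2 * a2⁻¹ + c0 ^ 2 * a1⁻¹) * (1 - z * a1⁻¹) * (1 - z * a2⁻¹) := by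
      rw [mul_pow, mul_pow, hA2, hB2, hP2]
    rw [h1, h2']
    have hc0sq : c0 ^ 2 ≤ 1 := by linarith [sq_nonneg s0]
    have ka : (a2⁻¹ - a1⁻¹) ^ 2 ≤ a2⁻¹ ^ 2 := by
      have := sq_le_sq' (by linarith : -a2⁻¹ ≤ a2⁻¹ - a1⁻¹)
        (by linarith : a2⁻¹ - a1⁻¹ ≤ a2⁻¹)
      exact this
    have kb : s0 ^ 2 * c0 ^ 2 ≤ s0 ^ 2 := mul_le_of_le_one_right (sq_nonneg s0) hc0sq
    have kc : s0 ^ 2 * c0 ^ 2 * (a2⁻¹ - a1⁻¹) ^ 2 ≤ s0 ^ 2 * a2⁻¹ ^ 2 :=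
      mul_le_mul kb ka (sq_nonneg _) (sq_nonneg s0)
    have kd : (0:ℝ) ≤ c0 ^ 2 * (a1⁻¹ * a2⁻¹) :=
      mul_nonneg (sq_nonneg c0) (mul_pos hu1 hu2).le
    have k1 : s0 ^ 2 * c0 ^ 2 * (a2⁻¹ - a1⁻¹) ^ 2
        ≤ (s0 ^ 2 * a2⁻¹ + c0 ^ 2 * a1⁻¹) * a2⁻¹ := by
      have expand2 : (s0 ^ 2 * a2⁻¹ + c0 ^ 2 * a1⁻¹) * a2⁻¹
          = s0 ^ 2 * a2⁻¹ ^ 2 + c0 ^ 2 * (a1⁻¹ * a2⁻¹) := by ring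
      linarith [kc, kd]
    have k2 := mul_le_mul_of_nonneg_right k1 hznn
    have t1 : (0:ℝ) ≤ (-z) * a1⁻¹ := mul_nonneg hznn hu1.le
    have t2 : (0:ℝ) ≤ z ^ 2 * (a1⁻¹ * a2⁻¹) := by positivity
    have q2 : (0:ℝ) ≤ (s0 ^ 2 * a2⁻¹ + c0 ^ 2 * a1⁻¹)
        * (1 + (-z) * a1⁻¹ + z ^ 2 * (a1⁻¹ * a2⁻¹)) :=
      mul_nonneg hρ0pos.le (by linarith)
    have expand : (s0 ^ 2 * a2⁻¹ + c0 ^ 2 * a1⁻¹) * a2⁻¹ * (-z)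
        + (s0 ^ 2 * a2⁻¹ + c0 ^ 2 * a1⁻¹) * (1 + (-z) * a1⁻¹ + z ^ 2 * (a1⁻¹ * a2⁻¹))
        = (s0 ^ 2 * a2⁻¹ + c0 ^ 2 * a1⁻¹) * (1 - z * a1⁻¹) * (1 - z * a2⁻¹) := by ring
    linarith [k2, q2]
  have hNnn : 0 ≤ P * A * B + e * s0 * c0 * (1 / a2 - 1 / a1) * Q := by
    have hpab : 0 ≤ P * A * B := by positivity
    have habs : |e * s0 * c0 * (1 / a2 - 1 / a1) * Q| ≤ P * A * B := by
      rw [← Real.sqrt_sq hpab, ← Real.sqrt_sq_eq_abs]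
      exact Real.sqrt_le_sqrt hsqle
    linarith [neg_abs_le (e * s0 * c0 * (1 / a2 - 1 / a1) * Q), habs]
  have key := graves_key A B P Q e s0 c0 z a1⁻¹ a2⁻¹ hA2 hB2 hP2 hQ2 he2 hsc
  have hRHSnn : 0 ≤ (P * A * B + e * s0 * c0 * (1 / a2 - 1 / a1) * Q) / (1 - z * ρ) :=
    div_nonneg hNnn hDpos.le
  have hEq : s ^ 2 / a2 + c ^ 2 / a1
      = ((P * A * B + e * s0 * c0 * (1 / a2 - 1 / a1) * Q) / (1 - z * ρ)) ^ 2 := by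
    rw [hc, hs, hQP]
    linear_combination ((1 - z * ρ)⁻¹ ^ 2) * key
  rw [hPAB, hEq, Real.sqrt_sq hRHSnn]
end

section
/- Let A be symmetric invertible, z, z' ∈ ℂ nonzero with R_z, R_{z'} invertible, √R_z a symmetric square root commuting with A. Let x⁰, x¹ lie on xᵀAx = 1, set V₀¹ = √R_z x¹ - x⁰, V₁⁰ = √R_z x⁰ - x¹, N̂⁰ = Ax⁰, N̂¹ = Ax¹. Then the discriminant Δ(x⁰, x¹) := [(V₀¹)ᵀ R_{z'}^{-1} N̂⁰]² - z' (V₀¹)ᵀ A R_{z'}^{-1} V₀¹ · (N̂⁰)ᵀ R_{z'}^{-1} N̂⁰ is symmetric under exchanging (x⁰, V₀¹) with (x¹, V₁⁰); equivalently, the line through x⁰ with direction V₀¹ is tangent to the confocal quadric Q_{z'} if and only if the line through x¹ with direction V₁⁰ is. -/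
open Matrix

/-- The discriminant governing tangency of the segment lines to a confocal
quadric `Q_{z'}` is symmetric in `(x⁰, V₀¹)` and `(x¹, V₁⁰)`: the line through
`x⁰` with direction `V₀¹` is tangent to `Q_{z'}` iff the line through `x¹` with
direction `V₁⁰` is. -/
theorem discriminant_symmetry_tangency
    (n : ℕ) (A : Matrix (Fin (n + 1)) (Fin (n + 1)) ℂ)
    (hA : A.IsSymm) (hAinv : IsUnit A.det)
    (z z' : ℂ) (hz : z ≠ 0) (hz' : z' ≠ 0)
    (hRz : IsUnit (1 - z • A).det) (hRz' : IsUnit (1 - z' • A).det)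
    (S : Matrix (Fin (n + 1)) (Fin (n + 1)) ℂ)
    (hS : S.IsSymm) (hS2 : S * S = 1 - z • A) (hcomm : S * A = A * S)
    (x0 x1 : Fin (n + 1) → ℂ)
    (hx0 : x0 ⬝ᵥ A.mulVec x0 = 1) (hx1 : x1 ⬝ᵥ A.mulVec x1 = 1) :
    ((S.mulVec x1 - x0) ⬝ᵥ (1 - z' • A)⁻¹.mulVec (A.mulVec x0)) ^ 2 -
        z' * ((S.mulVec x1 - x0) ⬝ᵥ (A * (1 - z' • A)⁻¹).mulVec (S.mulVec x1 - x0)) *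
          (A.mulVec x0 ⬝ᵥ (1 - z' • A)⁻¹.mulVec (A.mulVec x0)) =
      ((S.mulVec x0 - x1) ⬝ᵥ (1 - z' • A)⁻¹.mulVec (A.mulVec x1)) ^ 2 -
        z' * ((S.mulVec x0 - x1) ⬝ᵥ (A * (1 - z' • A)⁻¹).mulVec (S.mulVec x0 - x1)) *
          (A.mulVec x1 ⬝ᵥ (1 - z' • A)⁻¹.mulVec (A.mulVec x1)) := by
  set R : Matrix (Fin (n + 1)) (Fin (n + 1)) ℂ := 1 - z' • A with hRdef
  set M : Matrix (Fin (n + 1)) (Fin (n + 1)) ℂ := R⁻¹ with hMdef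
  have hRA : R * A = A * R := by
    simp [hRdef, sub_mul, mul_sub, Matrix.smul_mul, Matrix.mul_smul]
  have hMR : M * R = 1 := Matrix.nonsing_inv_mul R hRz'
  have hRM : R * M = 1 := Matrix.mul_nonsing_inv R hRz'
  have hAM : A * M = M * A := by
    have h1 : M * (R * A) * M = M * (A * R) * M := by rw [hRA]
    calc A * M = (M * R) * (A * M) := by rw [hMR, one_mul]
      _ = M * (R * A) * M := by noncomm_ring
      _ = M * (A * R) * M := h1
      _ = (M * A) * (R * M) := by noncomm_ring
      _ = M * A := by rw [hRM, mul_one]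
  have hSR : S * R = R * S := by
    simp [hRdef, sub_mul, mul_sub, Matrix.smul_mul, Matrix.mul_smul, hcomm]
  have hSM : S * M = M * S := by
    have h1 : M * (S * R) * M = M * (R * S) * M := by rw [hSR]
    calc S * M = (M * R) * (S * M) := by rw [hMR, one_mul]
      _ = M * (R * S) * M := by noncomm_ring
      _ = M * (S * R) * M := h1.symm
      _ = (M * S) * (R * M) := by noncomm_ring
      _ = M * S := by rw [hRM, mul_one]
  have hRT : Rᵀ = R := by
    simp [hRdef, Matrix.transpose_sub, Matrix.transpose_smul, hA.eq]
  have hMT : Mᵀ = M := by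
    rw [hMdef, Matrix.transpose_nonsing_inv, hRT]
  have move : ∀ (P : Matrix (Fin (n + 1)) (Fin (n + 1)) ℂ), Pᵀ = P →
      ∀ u v : Fin (n + 1) → ℂ, (P *ᵥ u) ⬝ᵥ v = u ⬝ᵥ (P *ᵥ v) := by
    intro P hP u v
    rw [dotProduct_comm, Matrix.dotProduct_mulVec, ← Matrix.mulVec_transpose, hP,
      dotProduct_comm]
  have comSA : ∀ w, S *ᵥ (A *ᵥ w) = A *ᵥ (S *ᵥ w) := by
    intro w; rw [Matrix.mulVec_mulVec, Matrix.mulVec_mulVec, hcomm]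
  have comMA : ∀ w, M *ᵥ (A *ᵥ w) = A *ᵥ (M *ᵥ w) := by
    intro w; rw [Matrix.mulVec_mulVec, Matrix.mulVec_mulVec, hAM]
  have comMS : ∀ w, M *ᵥ (S *ᵥ w) = S *ᵥ (M *ᵥ w) := by
    intro w; rw [Matrix.mulVec_mulVec, Matrix.mulVec_mulVec, hSM]
  have sq : ∀ w, S *ᵥ (S *ᵥ w) = w - z • (A *ᵥ w) := by
    intro w
    rw [Matrix.mulVec_mulVec, hS2, Matrix.sub_mulVec, Matrix.one_mulVec,
      Matrix.smul_mulVec]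
  set B : (Fin (n + 1) → ℂ) → (Fin (n + 1) → ℂ) → ℂ := fun u v => u ⬝ᵥ M *ᵥ v with hBdef
  have Bsymm : ∀ u v, B u v = B v u := by
    intro u v
    show u ⬝ᵥ M *ᵥ v = v ⬝ᵥ M *ᵥ u
    rw [← move M hMT v u, dotProduct_comm]
  have BmoveS : ∀ u v, B (S *ᵥ u) v = B u (S *ᵥ v) := by
    intro u v
    show (S *ᵥ u) ⬝ᵥ M *ᵥ v = u ⬝ᵥ M *ᵥ (S *ᵥ v)
    rw [move S hS.eq u (M *ᵥ v), comMS]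
  have BmoveA : ∀ u v, B (A *ᵥ u) v = B u (A *ᵥ v) := by
    intro u v
    show (A *ᵥ u) ⬝ᵥ M *ᵥ v = u ⬝ᵥ M *ᵥ (A *ᵥ v)
    rw [move A hA.eq u (M *ᵥ v), comMA]
  have Bsub_l : ∀ u v w, B (u - v) w = B u w - B v w := by
    intro u v w
    show (u - v) ⬝ᵥ M *ᵥ w = u ⬝ᵥ M *ᵥ w - v ⬝ᵥ M *ᵥ w
    rw [sub_dotProduct]
  have Bsub_r : ∀ u v w, B u (v - w) = B u v - B u w := by
    intro u v w
    show u ⬝ᵥ M *ᵥ (v - w) = u ⬝ᵥ M *ᵥ v - u ⬝ᵥ M *ᵥ w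
    rw [Matrix.mulVec_sub, dotProduct_sub]
  have Bsmul_r : ∀ (c : ℂ) u v, B u (c • v) = c * B u v := by
    intro c u v
    show u ⬝ᵥ M *ᵥ (c • v) = c * (u ⬝ᵥ M *ᵥ v)
    rw [Matrix.mulVec_smul, dotProduct_smul, smul_eq_mul]
  -- constraint identity
  have key : ∀ x : Fin (n + 1) → ℂ, x ⬝ᵥ A *ᵥ x = 1 →
      B x (A *ᵥ x) = 1 + z' * B (A *ᵥ x) (A *ᵥ x) := by
    intro x hx
    have hMx : M *ᵥ x - z' • (M *ᵥ (A *ᵥ x)) = x := by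
      have h0 : (M * R) *ᵥ x = x := by rw [hMR, Matrix.one_mulVec]
      calc M *ᵥ x - z' • (M *ᵥ (A *ᵥ x))
          = (M - z' • (M * A)) *ᵥ x := by
            rw [Matrix.sub_mulVec, Matrix.smul_mulVec, ← Matrix.mulVec_mulVec]
        _ = (M * R) *ᵥ x := by
            congr 1
            rw [hRdef, mul_sub, mul_one, Matrix.mul_smul]
        _ = x := h0
    have h1 : B x (A *ᵥ x) - z' * B (A *ᵥ x) (A *ᵥ x) = 1 := by
      have hs : B x (A *ᵥ x) = B (A *ᵥ x) x := Bsymm _ _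
      rw [hs]
      show (A *ᵥ x) ⬝ᵥ M *ᵥ x - z' * ((A *ᵥ x) ⬝ᵥ M *ᵥ (A *ᵥ x)) = 1
      rw [← smul_eq_mul, ← dotProduct_smul, ← dotProduct_sub, hMx, dotProduct_comm, hx]
    linear_combination h1
  have k0 := key x0 hx0
  have k1 := key x1 hx1
  -- cross-term identities
  have hc2 : B x0 (A *ᵥ (S *ᵥ x1)) = B (S *ᵥ x1) (A *ᵥ x0) := by
    rw [← BmoveA, Bsymm]
  have hc3 : B (S *ᵥ x0) (A *ᵥ x1) = B (S *ᵥ x1) (A *ᵥ x0) := by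
    rw [BmoveS, comSA]
    exact hc2
  have hc5 : B x1 (A *ᵥ (S *ᵥ x0)) = B (S *ᵥ x1) (A *ᵥ x0) := by
    rw [← BmoveA, Bsymm, hc3]
  have hc1 : B (S *ᵥ x1) (A *ᵥ (S *ᵥ x1)) = B x1 (A *ᵥ x1) - z * B (A *ᵥ x1) (A *ᵥ x1) := by
    rw [BmoveS, comSA, sq, Matrix.mulVec_sub, Bsub_r, Matrix.mulVec_smul, Bsmul_r, BmoveA]
  have hc4 : B (S *ᵥ x0) (A *ᵥ (S *ᵥ x0)) = B x0 (A *ᵥ x0) - z * B (A *ᵥ x0) (A *ᵥ x0) := by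
    rw [BmoveS, comSA, sq, Matrix.mulVec_sub, Bsub_r, Matrix.mulVec_smul, Bsmul_r, BmoveA]
  -- rewrite the goal into B form
  have hfold : ∀ u v, u ⬝ᵥ M *ᵥ v = B u v := fun _ _ => rfl
  have hB2 : ∀ u v, u ⬝ᵥ (A * M) *ᵥ v = B u (A *ᵥ v) := by
    intro u v
    rw [hAM, ← Matrix.mulVec_mulVec]
  rw [hB2, hB2, hfold, hfold, hfold, hfold]
  rw [Bsub_l, Bsub_l, Bsub_l, Bsub_l, Matrix.mulVec_sub, Matrix.mulVec_sub,
    Bsub_r, Bsub_r, Bsub_r, Bsub_r, hc1, hc2, hc3, hc4, hc5]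
  linear_combination (2 * B (S *ᵥ x1) (A *ᵥ x0) - B x0 (A *ᵥ x0) - B x1 (A *ᵥ x1)) * (k1 - k0)
end
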